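/- Assume p_a p^a + σ u_a u^a = 0 where u_a = F_{ab}p^b, v_a = (⋆F)_{ab}p^b. Let g̃^{ab} = η^{ab} + σ F^{ac}F^b{}_c. Then g̃^{cd} p_c u_d = 0, g̃^{cd} p_c v_d = 0, g̃^{cd} u_c v_d = 0, and g̃^{cd} u_c u_d = g̃^{cd} v_c v_d = (u^c u_c)(1 + σF - σ²G²). Consequently the transport vector K^a = g̃^{ab} p_b satisfies K^a p_a = K^a u_a = K^a v_a = 0. -/

import Mathlib

open Finset

noncomputable section

/-- Minkowski metric η = diag(-1,1,1,1) (equal to its own inverse). -/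
def eta : Matrix (Fin 4) (Fin 4) ℝ :=
  Matrix.of fun a b => if a = b then (if a = 0 then (-1 : ℝ) else 1) else 0

/-- Levi-Civita symbol with ε₀₁₂₃ = 1 (Vandermonde formula). -/
def eps (a b c d : Fin 4) : ℝ :=
  (((b : ℕ) : ℝ) - ((a : ℕ) : ℝ)) * (((c : ℕ) : ℝ) - ((a : ℕ) : ℝ)) *
  (((d : ℕ) : ℝ) - ((a : ℕ) : ℝ)) * (((c : ℕ) : ℝ) - ((b : ℕ) : ℝ)) *
  (((d : ℕ) : ℝ) - ((b : ℕ) : ℝ)) * (((d : ℕ) : ℝ) - ((c : ℕ) : ℝ)) / 12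

/-- F^{ab}: both indices raised with η. -/
def raise (F : Matrix (Fin 4) (Fin 4) ℝ) : Matrix (Fin 4) (Fin 4) ℝ :=
  Matrix.of fun a b => ∑ c, ∑ d, eta a c * eta b d * F c d

/-- F_a{}^b: second index raised. -/
def mixdu (F : Matrix (Fin 4) (Fin 4) ℝ) : Matrix (Fin 4) (Fin 4) ℝ :=
  Matrix.of fun a b => ∑ c, F a c * eta c b

/-- F^a{}_b: first index raised. -/
def mixud (F : Matrix (Fin 4) (Fin 4) ℝ) : Matrix (Fin 4) (Fin 4) ℝ :=
  Matrix.of fun a b => ∑ c, eta a c * F c b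

/-- Hodge dual (⋆F)_{ab} = (1/2) ε_{abcd} F^{cd}. -/
def hodge (F : Matrix (Fin 4) (Fin 4) ℝ) : Matrix (Fin 4) (Fin 4) ℝ :=
  Matrix.of fun a b => (1 / 2) * ∑ c, ∑ d, eps a b c d * raise F c d

/-- Invariant F = (1/2) F_{ab} F^{ab}. -/
def invF (F : Matrix (Fin 4) (Fin 4) ℝ) : ℝ :=
  (1 / 2) * ∑ a, ∑ b, F a b * raise F a b

/-- Invariant G = -(1/4) F_{ab} (⋆F)^{ab}. -/
def invG (F : Matrix (Fin 4) (Fin 4) ℝ) : ℝ :=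
  -(1 / 4) * ∑ a, ∑ b, F a b * raise (hodge F) a b

/-- raise the index of a covector: p^a = η^{ab} p_b. -/
def vup (p : Fin 4 → ℝ) : Fin 4 → ℝ := fun a => ∑ b, eta a b * p b

/-- scalar contraction x_a y^a of two covectors. -/
def contra (x y : Fin 4 → ℝ) : ℝ := ∑ a, ∑ b, x a * eta a b * y b

/-- u_a = F_{ab} p^b. -/
def lower (F : Matrix (Fin 4) (Fin 4) ℝ) (p : Fin 4 → ℝ) : Fin 4 → ℝ :=
  fun a => ∑ b, F a b * vup p b

def AntisymM4 (F : Matrix (Fin 4) (Fin 4) ℝ) : Prop := ∀ a b, F a b = - F b a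

/-- optical metric g̃^{bc} = η^{bc} + σ F^{bd} F^c{}_d. -/
def gtil (F : Matrix (Fin 4) (Fin 4) ℝ) (σ : ℝ) : Matrix (Fin 4) (Fin 4) ℝ :=
  Matrix.of fun b c => eta b c + σ * ∑ d, raise F b d * mixud F c d

/-- the matrix M_b{}^d of the zeroth-order field equation. -/
def Mmat (F : Matrix (Fin 4) (Fin 4) ℝ) (p : Fin 4 → ℝ)
    (LF LFF LFG LGG : ℝ) : Matrix (Fin 4) (Fin 4) ℝ :=
  Matrix.of fun b d =>
    -2 * LF * contra p p * (if b = d then (1 : ℝ) else 0)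
    + 2 * LF * p b * vup p d
    - 4 * LFF * lower F p b * vup (lower F p) d
    + 2 * LFG * (lower F p b * vup (lower (hodge F) p) d
        + lower (hodge F) p b * vup (lower F p) d)
    - LGG * lower (hodge F) p b * vup (lower (hodge F) p) d

/-
Let `B` be the Minkowski form and `T`, `S` the endomorphisms `F` and `⋆F` of covectors, so that
`u = T p`, `v = S p` and `g̃(x, y) = B(x, y) + σ B(T x, T y)`. Both `T` and `S` are `B`-skew, and in
dimension four `S T = G` and `S² - T² = F`; these two identities are the only coordinate
computations. Each claimed contraction is then reduced, by moving `T` and `S` across `B`, to a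
combination of `B(p, p)` and `B(u, u)`, and the eikonal equation `B(p, p) = -σ B(u, u)` finishes.
-/

open scoped Matrix

section OpticalForm

variable {R V : Type*} [CommRing R] [AddCommGroup V] [Module R V]
  {B : LinearMap.BilinForm R V} {T S : V →ₗ[R] V}

def opticalForm (B : LinearMap.BilinForm R V) (T : V →ₗ[R] V) (σ : R) :
    LinearMap.BilinForm R V :=
  B + σ • B.compl₁₂ T T

theorem opticalForm_apply (σ : R) (x y : V) :
    opticalForm B T σ x y = B x y + σ * B (T x) (T y) := rfl

theorem opticalForm_comm (hB : B.IsSymm) (σ : R) (x y : V) :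
    opticalForm B T σ x y = opticalForm B T σ y x := by
  rw [opticalForm_apply, opticalForm_apply, hB.eq x y, hB.eq (T x)]

theorem LinearMap.IsSkewAdjoint.apply_left (hT : B.IsSkewAdjoint T) (x y : V) :
    B (T x) y = -B x (T y) := by
  rw [hT x y, Pi.neg_apply, map_neg]

theorem LinearMap.IsSkewAdjoint.apply_right (hT : B.IsSkewAdjoint T) (x y : V) :
    B x (T y) = -B (T x) y := by
  rw [hT.apply_left, neg_neg]

theorem LinearMap.IsSkewAdjoint.apply_self_eq_zero [NoZeroDivisors R] [CharZero R]
    (hB : B.IsSymm) (hT : B.IsSkewAdjoint T) (x : V) : B x (T x) = 0 := by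
  rw [← CharZero.eq_neg_self_iff, ← hT.apply_left, hB.eq]

theorem opticalForm_self_map [NoZeroDivisors R] [CharZero R] (hB : B.IsSymm)
    (hT : B.IsSkewAdjoint T) (σ : R) (x : V) : opticalForm B T σ x (T x) = 0 := by
  rw [opticalForm_apply, hT.apply_self_eq_zero hB, hT.apply_self_eq_zero hB, mul_zero, add_zero]

-- `S` stands for `⋆F`; the hypotheses `S ∘ T = g` and `S ∘ S - T ∘ T = f` below are the two
-- duality identities, with `g = G` and `f = F`.

variable {f g σ : R} {p : V}

theorem opticalForm_self_dual [NoZeroDivisors R] [CharZero R] (hB : B.IsSymm)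
    (hT : B.IsSkewAdjoint T) (hS : B.IsSkewAdjoint S) (hST : ∀ x, S (T x) = g • x) (x : V) :
    opticalForm B T σ x (S x) = 0 := by
  have h : B (T x) (T (S x)) = 0 := by
    rw [hT.apply_right, hS.apply_right, hST, map_smul, LinearMap.smul_apply, hB.eq,
      hT.apply_self_eq_zero hB, smul_zero, neg_zero, neg_zero]
  rw [opticalForm_apply, hS.apply_self_eq_zero hB, h, mul_zero, add_zero]

theorem opticalForm_map_dual (hT : B.IsSkewAdjoint T) (hS : B.IsSkewAdjoint S)
    (hST : ∀ x, S (T x) = g • x) (heik : opticalForm B T σ p p = 0) :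
    opticalForm B T σ (T p) (S p) = 0 := by
  have h₁ : B (T p) (S p) = -g * B p p := by
    rw [hS.apply_right, hST, map_smul, LinearMap.smul_apply, smul_eq_mul, neg_mul]
  have h₂ : B (T (T p)) (T (S p)) = -g * B (T p) (T p) := by
    rw [hT.apply_right, hS.apply_right, hST, map_smul, LinearMap.smul_apply, smul_eq_mul,
      hT.apply_left]
    ring
  rw [opticalForm_apply] at heik ⊢
  linear_combination h₁ + σ * h₂ - g * heik

theorem opticalForm_map_map (hT : B.IsSkewAdjoint T) (hS : B.IsSkewAdjoint S)
    (hST : ∀ x, S (T x) = g • x) (hSS : ∀ x, S (S x) - T (T x) = f • x)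
    (heik : opticalForm B T σ p p = 0) :
    opticalForm B T σ (T p) (T p) = B (T p) (T p) * (1 + σ * f - σ ^ 2 * g ^ 2) := by
  have hTT : T (T p) = S (S p) - f • p := by rw [← hSS p]; abel
  have h₁ : B (S (S p)) (T (T p)) = g ^ 2 * B p p := by
    rw [hS.apply_left, hST, map_smul, smul_eq_mul, hS.apply_left, hST, map_smul, smul_eq_mul]
    ring
  have h₂ : B (T (T p)) (T (T p)) = g ^ 2 * B p p + f * B (T p) (T p) := by
    nth_rw 1 [hTT]
    rw [map_sub, map_smul, LinearMap.sub_apply, LinearMap.smul_apply, smul_eq_mul, h₁,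
      hT.apply_right p]
    ring
  rw [opticalForm_apply] at heik ⊢
  linear_combination σ * h₂ + σ * g ^ 2 * heik

theorem opticalForm_dual_dual (hB : B.IsSymm) (hT : B.IsSkewAdjoint T)
    (hS : B.IsSkewAdjoint S) (hST : ∀ x, S (T x) = g • x)
    (hSS : ∀ x, S (S x) - T (T x) = f • x) (heik : opticalForm B T σ p p = 0) :
    opticalForm B T σ (S p) (S p) = B (T p) (T p) * (1 + σ * f - σ ^ 2 * g ^ 2) := by
  have hSS' : S (S p) = T (T p) + f • p := by rw [← hSS p]; abel
  have h₁ : B (S p) (S p) = B (T p) (T p) - f * B p p := by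
    rw [hS.apply_right, hB.eq, hSS', map_add, map_smul, smul_eq_mul, hT.apply_right p]
    ring
  have h₂ : B (T (S p)) (T (S p)) = g ^ 2 * B p p := by
    rw [hT.apply_right, hS.apply_right, hST, map_smul, LinearMap.smul_apply, smul_eq_mul,
      hT.apply_left, hS.apply_left, hST, map_smul, smul_eq_mul]
    ring
  rw [opticalForm_apply] at heik ⊢
  linear_combination h₁ + σ * h₂ + (σ * g ^ 2 - f) * heik

end OpticalForm

theorem Matrix.isSkewAdjoint_toLin'_mul {n R : Type*} [Fintype n] [DecidableEq n] [CommRing R]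
    {J A : Matrix n n R} (hJ : J.IsSymm) (hA : Aᵀ = -A) :
    (Matrix.toBilin' J).IsSkewAdjoint (Matrix.toLin' (A * J)) := by
  have : Matrix.IsAdjointPair J J (A * J) (-(A * J)) := by
    simp [Matrix.IsAdjointPair, Matrix.transpose_mul, hJ.eq, hA, Matrix.mul_assoc]
  rw [LinearMap.IsSkewAdjoint, ← LinearMap.coe_neg, ← map_neg]
  exact (isAdjointPair_toLinearMap₂' _ _ _ _).mpr this

theorem eta_eq : eta = Matrix.diagonal ![-1, 1, 1, 1] := by
  ext i j
  fin_cases i <;> fin_cases j <;> rfl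

theorem eta_isSymm : eta.IsSymm := by
  rw [eta_eq]
  exact Matrix.isSymm_diagonal _

theorem contra_eq (x y : Fin 4 → ℝ) : contra x y = Matrix.toBilin' eta x y := by
  rw [Matrix.toBilin'_apply]
  rfl

theorem lower_eq (F : Matrix (Fin 4) (Fin 4) ℝ) (p : Fin 4 → ℝ) :
    lower F p = Matrix.toLin' (F * eta) p := by
  rw [Matrix.toLin'_apply, ← Matrix.mulVec_mulVec]
  rfl

theorem raise_eq (F : Matrix (Fin 4) (Fin 4) ℝ) : raise F = eta * F * eta := by
  ext a b
  simp [raise, Matrix.mul_apply, eta_eq, Matrix.diagonal_apply]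
  ring

theorem mixud_eq (F : Matrix (Fin 4) (Fin 4) ℝ) : mixud F = eta * F := by
  ext a b
  simp [mixud, Matrix.mul_apply]

namespace AntisymM4

variable {F : Matrix (Fin 4) (Fin 4) ℝ}

theorem transpose_eq (hF : AntisymM4 F) : Fᵀ = -F := by
  ext i j
  exact hF j i

theorem entries_eq (hF : AntisymM4 F) :
    F 0 0 = 0 ∧ F 1 1 = 0 ∧ F 2 2 = 0 ∧ F 3 3 = 0 ∧ F 1 0 = -F 0 1 ∧ F 2 0 = -F 0 2 ∧
      F 3 0 = -F 0 3 ∧ F 2 1 = -F 1 2 ∧ F 3 1 = -F 1 3 ∧ F 3 2 = -F 2 3 := by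
  refine ⟨?_, ?_, ?_, ?_, hF 1 0, hF 2 0, hF 3 0, hF 2 1, hF 3 1, hF 3 2⟩ <;>
    linarith [hF 0 0, hF 1 1, hF 2 2, hF 3 3]

theorem gtil_eq (hF : AntisymM4 F) (σ : ℝ) :
    gtil F σ = eta + σ • ((F * eta)ᵀ * eta * (F * eta)) := by
  have h : gtil F σ = eta + σ • (raise F * (mixud F)ᵀ) := by
    ext b c
    simp [gtil, Matrix.mul_apply]
  rw [h, raise_eq, mixud_eq, Matrix.transpose_mul, Matrix.transpose_mul, eta_isSymm.eq,
    hF.transpose_eq]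
  simp only [Matrix.mul_neg, Matrix.neg_mul, Matrix.mul_assoc]

theorem toBilin'_gtil (hF : AntisymM4 F) (σ : ℝ) :
    Matrix.toBilin' (gtil F σ) = opticalForm (Matrix.toBilin' eta) (Matrix.toLin' (F * eta)) σ := by
  rw [hF.gtil_eq, map_add, map_smul, ← Matrix.toBilin'_comp]
  rfl

theorem hodge_eq (hF : AntisymM4 F) :
    hodge F =
      !![0, F 2 3, -F 1 3, F 1 2;
         -F 2 3, 0, -F 0 3, F 0 2;
         F 1 3, F 0 3, 0, -F 0 1;
         -F 1 2, -F 0 2, F 0 1, 0] := by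
  ext i j
  fin_cases i <;> fin_cases j <;>
    simp [hodge, raise, eps, eta, Fin.sum_univ_four, hF.entries_eq] <;> ring

theorem hodge_transpose (hF : AntisymM4 F) : (hodge F)ᵀ = -hodge F := by
  rw [hF.hodge_eq]
  ext i j
  fin_cases i <;> fin_cases j <;> simp

theorem invF_eq (hF : AntisymM4 F) :
    invF F = F 1 2 ^ 2 + F 1 3 ^ 2 + F 2 3 ^ 2 - F 0 1 ^ 2 - F 0 2 ^ 2 - F 0 3 ^ 2 := by
  simp [invF, raise, eta_eq, Fin.sum_univ_four, Matrix.diagonal_apply, hF.entries_eq]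
  ring

theorem invG_eq (hF : AntisymM4 F) :
    invG F = F 0 1 * F 2 3 - F 0 2 * F 1 3 + F 0 3 * F 1 2 := by
  simp [invG, raise, hF.hodge_eq, eta_eq, Fin.sum_univ_four, Matrix.diagonal_apply, hF.entries_eq]
  ring

theorem hodge_mul_eta_mul (hF : AntisymM4 F) : hodge F * eta * (F * eta) = invG F • 1 := by
  ext i j
  rw [Matrix.mul_apply]
  simp only [eta_eq, Matrix.mul_diagonal, Fin.sum_univ_four, hF.invG_eq, hF.hodge_eq]
  fin_cases i <;> fin_cases j <;>
    simp [hF.entries_eq] <;> ring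

theorem hodge_mul_eta_sq_sub (hF : AntisymM4 F) :
    hodge F * eta * (hodge F * eta) - F * eta * (F * eta) = invF F • 1 := by
  ext i j
  rw [Matrix.sub_apply, Matrix.mul_apply, Matrix.mul_apply]
  simp only [eta_eq, Matrix.mul_diagonal, Fin.sum_univ_four, hF.invF_eq, hF.hodge_eq]
  fin_cases i <;> fin_cases j <;>
    simp [hF.entries_eq] <;> ring

end AntisymM4

theorem sum_gtil_mul_mul (F : Matrix (Fin 4) (Fin 4) ℝ) (σ : ℝ) (x y : Fin 4 → ℝ) :
    ∑ c, ∑ d, gtil F σ c d * x c * y d = Matrix.toBilin' (gtil F σ) x y := by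
  rw [Matrix.toBilin'_apply]
  simp only [mul_comm (gtil F σ _ _)]

theorem sum_gtil_mulVec_mul (F : Matrix (Fin 4) (Fin 4) ℝ) (σ : ℝ) (x y : Fin 4 → ℝ) :
    ∑ a, (∑ b, gtil F σ a b * x b) * y a = Matrix.toBilin' (gtil F σ) y x := by
  rw [Matrix.toBilin'_apply]
  simp only [Finset.sum_mul]
  exact Finset.sum_congr rfl fun _ _ => Finset.sum_congr rfl fun _ _ => by ring

/-- Under the eikonal condition p_ap^a + σ u_au^a = 0, the optical-metric
    contractions of p, u, v vanish appropriately, and the transport vector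
    K^a = g̃^{ab}p_b is orthogonal to p, u and v. -/
theorem stmt10 (F : Matrix (Fin 4) (Fin 4) ℝ) (hF : AntisymM4 F) (σ : ℝ)
    (p : Fin 4 → ℝ)
    (heik : contra p p + σ * contra (lower F p) (lower F p) = 0) :
    (∑ c, ∑ d, gtil F σ c d * p c * lower F p d = 0) ∧
    (∑ c, ∑ d, gtil F σ c d * p c * lower (hodge F) p d = 0) ∧
    (∑ c, ∑ d, gtil F σ c d * lower F p c * lower (hodge F) p d = 0) ∧
    (∑ c, ∑ d, gtil F σ c d * lower F p c * lower F p d =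
      contra (lower F p) (lower F p) *
        (1 + σ * invF F - σ ^ 2 * (invG F) ^ 2)) ∧
    (∑ c, ∑ d, gtil F σ c d * lower (hodge F) p c * lower (hodge F) p d =
      contra (lower F p) (lower F p) *
        (1 + σ * invF F - σ ^ 2 * (invG F) ^ 2)) ∧
    (∑ a, (∑ b, gtil F σ a b * p b) * p a = 0) ∧
    (∑ a, (∑ b, gtil F σ a b * p b) * lower F p a = 0) ∧
    (∑ a, (∑ b, gtil F σ a b * p b) * lower (hodge F) p a = 0) := by
  set B := Matrix.toBilin' eta
  set T := Matrix.toLin' (F * eta)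
  set S := Matrix.toLin' (hodge F * eta)
  have hB : B.IsSymm := Matrix.isSymm_toBilin'_iff_isSymm.mpr eta_isSymm
  have hT : B.IsSkewAdjoint T := Matrix.isSkewAdjoint_toLin'_mul eta_isSymm hF.transpose_eq
  have hS : B.IsSkewAdjoint S := Matrix.isSkewAdjoint_toLin'_mul eta_isSymm hF.hodge_transpose
  have hST : ∀ x, S (T x) = invG F • x := fun x => by
    rw [← Matrix.toLin'_mul_apply, hF.hodge_mul_eta_mul, map_smul, Matrix.toLin'_one]
    rfl
  have hSS : ∀ x, S (S x) - T (T x) = invF F • x := fun x => by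
    rw [← Matrix.toLin'_mul_apply, ← Matrix.toLin'_mul_apply, ← LinearMap.sub_apply, ← map_sub,
      hF.hodge_mul_eta_sq_sub, map_smul, Matrix.toLin'_one]
    rfl
  have heik' : opticalForm B T σ p p = 0 := by
    rwa [opticalForm_apply, ← contra_eq, ← lower_eq, ← contra_eq]
  simp only [sum_gtil_mul_mul, sum_gtil_mulVec_mul, hF.toBilin'_gtil, contra_eq, lower_eq]
  refine ⟨opticalForm_self_map hB hT σ p, opticalForm_self_dual hB hT hS hST p,
    opticalForm_map_dual hT hS hST heik', opticalForm_map_map hT hS hST hSS heik',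
    opticalForm_dual_dual hB hT hS hST hSS heik', heik', ?_, ?_⟩
  · rw [opticalForm_comm hB]
    exact opticalForm_self_map hB hT σ p
  · rw [opticalForm_comm hB]
    exact opticalForm_self_dual hB hT hS hST p
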